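/- Let G be a clique tree consisting of one block K_m with m ≥ 3 and all remaining blocks isomorphic to K₃, each attached at a vertex of K_m, with triangle blocks attached at more than one vertex of K_m. Let x be a Perron vector of G, label the vertices of K_m as v₁, …, v_m so that x_{v₁} ≥ x_{v_i} for all 1 ≤ i ≤ m, and let G* be the graph obtained from G by reattaching all the triangle blocks at the single vertex v₁. Then ρ(G) < ρ(G*). -/

import Mathlib

open Classical

/-- The set of vertices eventually forced blue, starting from the blue set `S`,
under the color-change rule: a blue vertex with exactly one non-blue neighbor
forces that neighbor. -/
inductive SimpleGraph.Forced {V : Type*} (G : SimpleGraph V) (S : Set V) : V → Prop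
  | init (v : V) (hv : v ∈ S) : SimpleGraph.Forced G S v
  | force (u w : V) (hu : SimpleGraph.Forced G S u) (hadj : G.Adj u w)
      (hothers : ∀ y, G.Adj u y → y ≠ w → SimpleGraph.Forced G S y) :
      SimpleGraph.Forced G S w

/-- `S` is a zero forcing set of `G` if starting from `S` blue, every vertex
eventually becomes blue. -/
def SimpleGraph.IsZeroForcingSet {V : Type*} (G : SimpleGraph V) (S : Set V) : Prop :=
  ∀ v, G.Forced S v

/-- The zero forcing number `Z(G)`: the least size of a zero forcing set. -/
noncomputable def SimpleGraph.zeroForcingNumber {V : Type*} (G : SimpleGraph V) : ℕ :=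
  sInf {n | ∃ S : Set V, S.ncard = n ∧ G.IsZeroForcingSet S}

/-- The induced subgraph of `G` on `B` is connected and has no cut vertex. -/
def SimpleGraph.IsConnectedNoCutVertexSet {V : Type*} (G : SimpleGraph V) (B : Set V) : Prop :=
  (G.induce B).Connected ∧ ∀ v ∈ B, B \ {v} = ∅ ∨ (G.induce (B \ {v})).Connected

/-- `B` is (the vertex set of) a block of `G`: a maximal connected subgraph
without cut vertices. -/
def SimpleGraph.IsBlock {V : Type*} (G : SimpleGraph V) (B : Set V) : Prop :=
  G.IsConnectedNoCutVertexSet B ∧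
    ∀ C, B ⊆ C → G.IsConnectedNoCutVertexSet C → B = C

/-- `v` is a cut vertex of `G`: `G` is connected but `G - v` is not. -/
def SimpleGraph.IsCutVertex {V : Type*} (G : SimpleGraph V) (v : V) : Prop :=
  G.Connected ∧ ¬ (G.induce ({v}ᶜ : Set V)).Connected

/-- A clique tree: a connected graph each of whose blocks is a clique. -/
def SimpleGraph.IsCliqueTree {V : Type*} (G : SimpleGraph V) : Prop :=
  G.Connected ∧ ∀ B : Set V, G.IsBlock B → G.IsClique B

/-- The real adjacency matrix of a graph. -/
noncomputable def SimpleGraph.adjMatR {V : Type*} [Fintype V] (G : SimpleGraph V) :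
    Matrix V V ℝ :=
  Matrix.of fun i j => if G.Adj i j then (1 : ℝ) else 0

/-- The spectral radius of a (connected) graph: the largest real eigenvalue of
its adjacency matrix. -/
noncomputable def SimpleGraph.specRad {V : Type*} [Fintype V] (G : SimpleGraph V) : ℝ :=
  sSup {t : ℝ | ∃ x : V → ℝ, x ≠ 0 ∧ G.adjMatR.mulVec x = t • x}

/-- The clique tree `𝒢(n,k)` on vertex set `Fin n`: one block `K_{2k-n+2}`
(on the vertices `0, 1, …, 2k-n+1`) and `n-k-1` triangle blocks (on the vertex
`0` together with the pairs `{2k-n+2i, 2k-n+1+2i}` for `1 ≤ i ≤ n-k-1`), all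
sharing the single central cut vertex `0`. -/
def calG (n k : ℕ) : SimpleGraph (Fin n) :=
  SimpleGraph.fromRel (fun i j =>
    (i.val = 0 ∨ j.val = 0) ∨
    (i.val ≤ 2 * k - n + 1 ∧ j.val ≤ 2 * k - n + 1) ∨
    (2 * k - n + 1 < i.val ∧ 2 * k - n + 1 < j.val ∧
      (i.val - (2 * k - n + 2)) / 2 = (j.val - (2 * k - n + 2)) / 2))

/-!
Every vertex `u` outside `K_m` has at most one neighbour `w(u)` in `K_m`, and the move replaces
the edge `u w(u)` by `u v₁`. Hence `A(G*) = A(G) + D + Dᵀ` with `(D x)_u = x_{v₁} - x_{w(u)} ≥ 0`,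
so `xᵀ A(G*) x ≥ ρ(G) xᵀx` and `ρ(G*) ≥ ρ(G)` by the Rayleigh principle. Equality would make `x`
an eigenvector of `A(G*)` for `ρ(G)`, which fails at `v₁`: there `A(G*) x - ρ(G) x` is the total
weight of the vertices moved to `v₁` from elsewhere, and such vertices exist because triangles
hang at more than one vertex of `K_m`.
-/

namespace Matrix

variable {n : Type*} [Fintype n] {A : Matrix n n ℝ}

theorem IsHermitian.exists_eigenvalue_forall_dotProduct_mulVec_le [Nonempty n]
    (hA : A.IsHermitian) :
    ∃ μ : ℝ, (∃ v, v ≠ 0 ∧ A *ᵥ v = μ • v) ∧ ∀ x, x ⬝ᵥ A *ᵥ x ≤ μ * (x ⬝ᵥ x) := by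
  have hT : A.toEuclideanLin.IsSymmetric := isSymmetric_toEuclideanLin_iff.mpr hA
  have hbdd : BddAbove (Set.range fun x : {x : EuclideanSpace ℝ n // x ≠ 0} =>
      RCLike.re (inner ℝ (A.toEuclideanLin x) x) / ‖(x : EuclideanSpace ℝ n)‖ ^ 2) :=
    ⟨_, Set.forall_mem_range.mpr fun x =>
      (abs_le.mp (hT.toSelfAdjoint.val.rayleighQuotient_le_norm x)).2⟩
  obtain ⟨v, hv⟩ := hT.hasEigenvalue_iSup_of_finiteDimensional.exists_hasEigenvector
  refine ⟨_, ⟨WithLp.ofLp v, by simpa using hv.2,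
    by simpa using congrArg WithLp.ofLp (Module.End.mem_eigenspace_iff.mp hv.1)⟩, fun x => ?_⟩
  rcases eq_or_ne x 0 with rfl | hx
  · simp
  have hx' : WithLp.toLp 2 x ≠ 0 := by simpa using hx
  have hnorm : ‖WithLp.toLp 2 x‖ ^ 2 = x ⬝ᵥ x := by
    rw [EuclideanSpace.norm_sq_eq]
    simp [dotProduct, sq]
  have := le_ciSup hbdd ⟨_, hx'⟩
  rw [div_le_iff₀ (by positivity), hnorm] at this
  simpa [EuclideanSpace.inner_eq_star_dotProduct] using this

theorem IsHermitian.lt_sSup_of_le_dotProduct_mulVec (hA : A.IsHermitian) {r : ℝ} {y : n → ℝ}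
    (hy : y ≠ 0) (hle : r * (y ⬝ᵥ y) ≤ y ⬝ᵥ A *ᵥ y) (hne : A *ᵥ y ≠ r • y) :
    r < sSup {t | ∃ x, x ≠ 0 ∧ A *ᵥ x = t • x} := by
  have : Nonempty n := not_isEmpty_iff.mp fun _ => hy (Subsingleton.elim _ _)
  obtain ⟨μ, hμ, hbound⟩ := hA.exists_eigenvalue_forall_dotProduct_mulVec_le
  have hpos {x : n → ℝ} (hx : x ≠ 0) : 0 < x ⬝ᵥ x := by
    simpa using dotProduct_self_star_pos_iff.mpr hx
  have hsSup : sSup {t | ∃ x, x ≠ 0 ∧ A *ᵥ x = t • x} = μ := by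
    refine IsGreatest.csSup_eq ⟨hμ, ?_⟩
    rintro t ⟨x, hx, hAx⟩
    refine le_of_mul_le_mul_right ?_ (hpos hx)
    simpa [hAx] using hbound x
  rw [hsSup]
  refine (le_of_mul_le_mul_right (hle.trans (hbound y)) (hpos hy)).lt_of_ne ?_
  rintro rfl
  -- `r • 1 - A` is positive semidefinite and its quadratic form vanishes at `y`, so it kills `y`
  have hpsd : (r • 1 - A).PosSemidef := by
    refine posSemidef_iff_dotProduct_mulVec.mpr
      ⟨(isHermitian_one.smul (.all r)).sub hA, fun x => ?_⟩
    simpa [sub_mulVec, smul_mulVec, dotProduct_sub] using hbound x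
  have hker := (hpsd.dotProduct_mulVec_zero_iff y).mp (by
    simp only [star_trivial, sub_mulVec, smul_mulVec, one_mulVec, dotProduct_sub, dotProduct_smul,
      smul_eq_mul]
    linarith [hbound y])
  exact hne (by simpa [sub_mulVec, smul_mulVec, sub_eq_zero, eq_comm] using hker)

end Matrix

namespace SimpleGraph

variable {V : Type*}

section Blocks

variable {G : SimpleGraph V}

theorem IsClique.induce_connected {S : Set V} (hS : G.IsClique S) (hne : S.Nonempty) :
    (G.induce S).Connected := by
  have : Nonempty S := hne.to_subtype
  rw [induce_eq_top.mpr hS]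
  exact connected_top

theorem IsClique.isConnectedNoCutVertexSet {S : Set V} (hS : G.IsClique S) (hne : S.Nonempty) :
    G.IsConnectedNoCutVertexSet S := by
  refine ⟨hS.induce_connected hne, fun v _ => ?_⟩
  rcases (S \ {v}).eq_empty_or_nonempty with h | h
  · exact Or.inl h
  · exact Or.inr ((hS.subset Set.sdiff_subset).induce_connected h)

theorem exists_isBlock_superset [Finite V] {S : Set V} (hS : G.IsConnectedNoCutVertexSet S) :
    ∃ B, G.IsBlock B ∧ S ⊆ B := by
  obtain ⟨B, ⟨hSB, hB⟩, hmax⟩ := Set.Finite.exists_maximalFor Set.ncard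
    {C | S ⊆ C ∧ G.IsConnectedNoCutVertexSet C} (Set.toFinite _) ⟨S, subset_rfl, hS⟩
  refine ⟨B, ⟨hB, fun C hBC hC => ?_⟩, hSB⟩
  exact Set.eq_of_subset_of_ncard_le hBC
    (hmax ⟨hSB.trans hBC, hC⟩ (Set.ncard_le_ncard hBC)) (Set.toFinite _)

theorem adj_iff_exists_isBlock [Finite V] (hblocks : ∀ C, G.IsBlock C → G.IsClique C) {i j : V} :
    G.Adj i j ↔ i ≠ j ∧ ∃ C, G.IsBlock C ∧ i ∈ C ∧ j ∈ C := by
  refine ⟨fun h => ?_, fun ⟨hij, C, hC, hi, hj⟩ => hblocks C hC hi hj hij⟩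
  obtain ⟨C, hC, hsub⟩ := exists_isBlock_superset
    ((isClique_pair.mpr fun _ => h).isConnectedNoCutVertexSet (Set.insert_nonempty i {j}))
  exact ⟨h.ne, C, hC, hsub (by simp), hsub (by simp)⟩

theorem subsingleton_adj_of_subsingleton_inter [Finite V] {B : Set V} (hB : G.IsClique B)
    (hinter : ∀ C, G.IsBlock C → C ≠ B → (C ∩ B).Subsingleton) {u : V} (hu : u ∉ B) :
    {w | w ∈ B ∧ G.Adj u w}.Subsingleton := by
  rintro w ⟨hw, huw⟩ w' ⟨hw', huw'⟩
  by_contra hne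
  have htriangle : G.IsClique {u, w, w'} := by
    simp only [isClique_insert, isClique_singleton, Set.mem_insert_iff, Set.mem_singleton_iff]
    grind [hB hw hw' hne]
  obtain ⟨C, hC, hsub⟩ := exists_isBlock_superset
    (htriangle.isConnectedNoCutVertexSet (Set.insert_nonempty u _))
  have hCB : C ≠ B := fun h => hu (h ▸ hsub (by simp))
  exact hne (hinter C hC hCB ⟨hsub (by simp), hw⟩ ⟨hsub (by simp), hw'⟩)

theorem exists_notMem_not_adj {B C : Set V} {v w : V} (hv : v ∈ B) (hC : G.IsClique C)
    (hcard : 1 < C.ncard) (hCB : (C ∩ B).Subsingleton) (hw : w ∈ C ∩ B) (hwv : w ≠ v)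
    (hsub : ∀ u ∉ B, {w | w ∈ B ∧ G.Adj u w}.Subsingleton) : ∃ u ∉ B, ¬ G.Adj u v := by
  obtain ⟨u, huC, huw⟩ := Set.exists_ne_of_one_lt_ncard hcard w
  have hu : u ∉ B := fun h => huw (hCB ⟨huC, h⟩ hw)
  exact ⟨u, hu, fun huv => hwv (hsub u hu ⟨hw.2, hC huC hw.1 huw⟩ ⟨hv, huv⟩)⟩

/-- The graph `G*`: all blocks other than `B₀` reattached at `v`. -/
def moveBlocksTo (G : SimpleGraph V) (B₀ : Set V) (v : V) : SimpleGraph V :=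
  fromRel fun i j =>
    (i ∈ B₀ ∧ j ∈ B₀) ∨
    (i ∉ B₀ ∧ j ∉ B₀ ∧ ∃ C : Set V, G.IsBlock C ∧ C ≠ B₀ ∧ i ∈ C ∧ j ∈ C) ∨
    (i = v ∧ j ∉ B₀)

variable {B₀ : Set V} {v i j : V}

theorem moveBlocksTo_adj_of_mem_of_notMem (hi : i ∈ B₀) (hj : j ∉ B₀) :
    (G.moveBlocksTo B₀ v).Adj i j ↔ i = v := by
  simp only [moveBlocksTo, fromRel_adj]
  grind

theorem moveBlocksTo_adj_iff_of_mem_iff [Finite V] (hblocks : ∀ C, G.IsBlock C → G.IsClique C)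
    (hB₀ : G.IsClique B₀) (hv : v ∈ B₀) (hij : i ∈ B₀ ↔ j ∈ B₀) :
    (G.moveBlocksTo B₀ v).Adj i j ↔ G.Adj i j := by
  simp only [moveBlocksTo, fromRel_adj]
  by_cases hi : i ∈ B₀
  · have hj := hij.mp hi
    grind [hB₀ hi hj, Adj.ne]
  · have hj : j ∉ B₀ := fun h => hi (hij.mpr h)
    rw [adj_iff_exists_isBlock hblocks]
    grind

end Blocks

section Spectral

open Matrix Finset

variable [Fintype V]

theorem isHermitian_adjMatR (G : SimpleGraph V) : G.adjMatR.IsHermitian := by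
  ext i j
  simp [adjMatR, G.adj_comm]

/-- For `u ∉ B`, row `u` trades the edges from `u` into `B` for the single edge `uv`. -/
noncomputable def rewireMatrix (G : SimpleGraph V) (B : Set V) (v : V) : Matrix V V ℝ :=
  Matrix.of fun i j => if i ∈ B then 0 else
    (if j = v then 1 else 0) - (if j ∈ B ∧ G.Adj i j then 1 else 0)

variable {G G' : SimpleGraph V} {B : Set V} {v : V}

theorem adjMatR_eq_add_rewireMatrix (hv : v ∈ B)
    (hsame : ∀ i j, (i ∈ B ↔ j ∈ B) → (G'.Adj i j ↔ G.Adj i j))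
    (hcross : ∀ i ∈ B, ∀ j ∉ B, (G'.Adj i j ↔ i = v)) :
    G'.adjMatR = G.adjMatR + G.rewireMatrix B v + (G.rewireMatrix B v)ᵀ := by
  ext i j
  by_cases hi : i ∈ B <;> by_cases hj : j ∈ B
  · simp [adjMatR, rewireMatrix, hi, hj, hsame i j (iff_of_true hi hj)]
  · simp [adjMatR, rewireMatrix, hi, hj, hcross i hi j hj, G.adj_comm]
  · simp [adjMatR, rewireMatrix, hi, hj, G'.adj_comm i, hcross j hj i hi]
  · have hne : ∀ k ∉ B, k ≠ v := fun k hk h => hk (h ▸ hv)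
    simp [adjMatR, rewireMatrix, hi, hj, hsame i j (iff_of_false hi hj), hne]

theorem rewireMatrix_mulVec_apply (x : V → ℝ) (i : V) :
    (G.rewireMatrix B v *ᵥ x) i =
      if i ∈ B then 0 else x v - ∑ j with j ∈ B ∧ G.Adj i j, x j := by
  by_cases hi : i ∈ B
  · simp [rewireMatrix, mulVec, dotProduct, hi]
  · simp [rewireMatrix, mulVec, dotProduct, hi, sub_mul, sum_sub_distrib, ite_mul, sum_ite]

theorem rewireMatrix_mulVec_nonneg {x : V → ℝ} (hx : 0 ≤ x) (hmax : ∀ u ∈ B, x u ≤ x v)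
    (hsub : ∀ u ∉ B, {w | w ∈ B ∧ G.Adj u w}.Subsingleton) :
    0 ≤ G.rewireMatrix B v *ᵥ x := by
  intro i
  rw [Pi.zero_apply, rewireMatrix_mulVec_apply]
  split_ifs with hi
  · rfl
  rw [sub_nonneg]
  rcases (univ.filter fun j => j ∈ B ∧ G.Adj i j).eq_empty_or_nonempty with h | ⟨w, hw⟩
  · simpa [h] using hx v
  · have hw' : w ∈ B ∧ G.Adj i w := by simpa using hw
    have hs : (univ.filter fun j => j ∈ B ∧ G.Adj i j) = {w} :=
      eq_singleton_iff_unique_mem.mpr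
        ⟨hw, fun u hu => hsub i hi (by simpa using hu) hw'⟩
    simpa [hs] using hmax w hw'.1

theorem rewireMatrix_transpose_mulVec_apply_pos {x : V → ℝ} (hx : ∀ u, 0 < x u)
    (hmoved : ∃ u ∉ B, ¬ G.Adj u v) : 0 < ((G.rewireMatrix B v)ᵀ *ᵥ x) v := by
  obtain ⟨u, hu, huv⟩ := hmoved
  simp only [mulVec, dotProduct, transpose_apply, rewireMatrix, of_apply]
  refine sum_pos' (fun i _ => mul_nonneg ?_ (hx i).le) ⟨u, mem_univ u, ?_⟩
  · split_ifs <;> simp_all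
  · simpa [hu, huv] using hx u

theorem lt_specRad_of_rewire (hv : v ∈ B)
    (hsame : ∀ i j, (i ∈ B ↔ j ∈ B) → (G'.Adj i j ↔ G.Adj i j))
    (hcross : ∀ i ∈ B, ∀ j ∉ B, (G'.Adj i j ↔ i = v))
    (hsub : ∀ u ∉ B, {w | w ∈ B ∧ G.Adj u w}.Subsingleton)
    {x : V → ℝ} (hx : ∀ u, 0 < x u) {ρ : ℝ} (heig : G.adjMatR *ᵥ x = ρ • x)
    (hmax : ∀ u ∈ B, x u ≤ x v) (hmoved : ∃ u ∉ B, ¬ G.Adj u v) :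
    ρ < G'.specRad := by
  have hA := adjMatR_eq_add_rewireMatrix hv hsame hcross
  have hx0 : 0 ≤ x := fun u => (hx u).le
  have hD := rewireMatrix_mulVec_nonneg (G := G) hx0 hmax hsub
  have hquad : ρ * (x ⬝ᵥ x) ≤ x ⬝ᵥ G'.adjMatR *ᵥ x := by
    rw [hA, add_mulVec, add_mulVec, dotProduct_add, dotProduct_add, heig,
      dotProduct_transpose_mulVec, dotProduct_smul, smul_eq_mul]
    linarith [dotProduct_nonneg_of_nonneg hx0 hD]
  have hgain : ρ * x v < (G'.adjMatR *ᵥ x) v := by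
    rw [hA, add_mulVec, add_mulVec, Pi.add_apply, Pi.add_apply, heig,
      rewireMatrix_mulVec_apply, if_pos hv]
    simpa using rewireMatrix_transpose_mulVec_apply_pos hx hmoved
  refine (isHermitian_adjMatR G').lt_sSup_of_le_dotProduct_mulVec
    (fun h => (hx v).ne' (congrFun h v)) hquad fun h => hgain.ne ?_
  simpa using (congrFun h v).symm

end Spectral

end SimpleGraph

theorem specRad_lt_move_triangles_general {V : Type*} [Fintype V] (G : SimpleGraph V)
    (hG : G.IsCliqueTree)
    (B₀ : Set V) (hB₀ : G.IsBlock B₀)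
    (htri : ∀ C : Set V, G.IsBlock C → C ≠ B₀ →
      C.ncard = 3 ∧ ∃! w, w ∈ C ∩ B₀)
    (hmany : ∃ C₁ C₂ : Set V, G.IsBlock C₁ ∧ G.IsBlock C₂ ∧ C₁ ≠ B₀ ∧ C₂ ≠ B₀ ∧
      ∃ w₁ ∈ C₁ ∩ B₀, ∃ w₂ ∈ C₂ ∩ B₀, w₁ ≠ w₂)
    (x : V → ℝ) (hx : ∀ v, 0 < x v)
    (heig : G.adjMatR.mulVec x = G.specRad • x)
    (v₁ : V) (hv₁ : v₁ ∈ B₀) (hmax : ∀ u ∈ B₀, x u ≤ x v₁)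
    (Gstar : SimpleGraph V)
    (hGstar : Gstar = SimpleGraph.fromRel (fun i j =>
      (i ∈ B₀ ∧ j ∈ B₀) ∨
      (i ∉ B₀ ∧ j ∉ B₀ ∧ ∃ C : Set V, G.IsBlock C ∧ C ≠ B₀ ∧ i ∈ C ∧ j ∈ C) ∨
      (i = v₁ ∧ j ∉ B₀))) :
    G.specRad < Gstar.specRad := by
  have hB₀clique : G.IsClique B₀ := hG.2 B₀ hB₀
  have hinter (C : Set V) (hC : G.IsBlock C) (hCB : C ≠ B₀) : (C ∩ B₀).Subsingleton :=
    fun _ ha _ hb => (htri C hC hCB).2.unique ha hb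
  have hsub (u : V) (hu : u ∉ B₀) : {w | w ∈ B₀ ∧ G.Adj u w}.Subsingleton :=
    G.subsingleton_adj_of_subsingleton_inter hB₀clique hinter hu
  obtain ⟨C, hC, hCB, w, hw, hwv⟩ : ∃ C, G.IsBlock C ∧ C ≠ B₀ ∧ ∃ w ∈ C ∩ B₀, w ≠ v₁ := by
    obtain ⟨C₁, C₂, hC₁, hC₂, hC₁B, hC₂B, w₁, hw₁, w₂, hw₂, hw₁₂⟩ := hmany
    by_cases h : w₁ = v₁
    · exact ⟨C₂, hC₂, hC₂B, w₂, hw₂, fun h' => hw₁₂ (h.trans h'.symm)⟩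
    · exact ⟨C₁, hC₁, hC₁B, w₁, hw₁, h⟩
  have hmoved : ∃ u ∉ B₀, ¬ G.Adj u v₁ :=
    SimpleGraph.exists_notMem_not_adj hv₁ (hG.2 C hC) (by rw [(htri C hC hCB).1]; norm_num)
      (hinter C hC hCB) hw hwv hsub
  subst hGstar
  exact SimpleGraph.lt_specRad_of_rewire hv₁
    (fun i j => SimpleGraph.moveBlocksTo_adj_iff_of_mem_iff hG.2 hB₀clique hv₁)
    (fun i hi j hj => SimpleGraph.moveBlocksTo_adj_of_mem_of_notMem hi hj)
    hsub hx heig hmax hmoved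

/-- Let `G` be a clique tree with one block `K_m` (`m ≥ 3`, with
vertex set `B₀`) and all remaining blocks triangles attached at vertices of
`K_m`, attached at more than one vertex of `K_m`.  Let `x` be a Perron vector of
`G`, label the vertices of `K_m` so that `x_{v₁}` is largest, and let `G*` be
obtained from `G` by reattaching all the triangle blocks at the single vertex
`v₁`.  Then `ρ(G) < ρ(G*)`. -/
theorem specRad_lt_move_triangles {V : Type*} [Fintype V] (G : SimpleGraph V)
    (hG : G.IsCliqueTree)
    (m : ℕ) (hm : 3 ≤ m)
    (B₀ : Set V) (hB₀ : G.IsBlock B₀) (hB₀card : B₀.ncard = m)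
    (htri : ∀ C : Set V, G.IsBlock C → C ≠ B₀ →
      C.ncard = 3 ∧ ∃! w, w ∈ C ∩ B₀)
    (hmany : ∃ C₁ C₂ : Set V, G.IsBlock C₁ ∧ G.IsBlock C₂ ∧ C₁ ≠ B₀ ∧ C₂ ≠ B₀ ∧
      ∃ w₁ ∈ C₁ ∩ B₀, ∃ w₂ ∈ C₂ ∩ B₀, w₁ ≠ w₂)
    (x : V → ℝ) (hx : ∀ v, 0 < x v)
    (heig : G.adjMatR.mulVec x = G.specRad • x)
    (v₁ : V) (hv₁ : v₁ ∈ B₀) (hmax : ∀ u ∈ B₀, x u ≤ x v₁)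
    (Gstar : SimpleGraph V)
    (hGstar : Gstar = SimpleGraph.fromRel (fun i j =>
      (i ∈ B₀ ∧ j ∈ B₀) ∨
      (i ∉ B₀ ∧ j ∉ B₀ ∧ ∃ C : Set V, G.IsBlock C ∧ C ≠ B₀ ∧ i ∈ C ∧ j ∈ C) ∨
      (i = v₁ ∧ j ∉ B₀))) :
    G.specRad < Gstar.specRad :=
  specRad_lt_move_triangles_general G hG B₀ hB₀ htri hmany x hx heig v₁ hv₁ hmax Gstar hGstar
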